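/- arXiv:1510.01875 — 2 statements merged into one kernel-verified Lean document; each statement's English description precedes it below -/
import Mathlib

section
/- Let k ≥ 2 be a real number and m an integer with m ≥ 2 and ⌊m^k⌋ ≥ 2. Then the open real interval (⌊m^k⌋ - (k - 0.5)·(⌊m^k⌋)^((k-1)/k), ⌊m^k⌋) is contained in the open interval ((m-1)^k, m^k), provided m is sufficiently large (depending on k). -/
theorem stmt_2 (k : ℝ) (hk : 2 ≤ k) :
    ∃ M : ℕ, ∀ m : ℕ, M < m → 2 ≤ m → 2 ≤ ⌊(m : ℝ) ^ k⌋ →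
      Set.Ioo ((⌊(m : ℝ) ^ k⌋ : ℝ) - (k - 0.5) * (⌊(m : ℝ) ^ k⌋ : ℝ) ^ ((k - 1) / k))
          ((⌊(m : ℝ) ^ k⌋ : ℝ))
        ⊆ Set.Ioo (((m : ℝ) - 1) ^ k) ((m : ℝ) ^ k) := by
  refine ⟨⌈2 * k ^ 2 + 2⌉₊, fun m hMm hm2 hfl2 => ?_⟩
  set x : ℝ := (m : ℝ) with hxdef
  have hx : 2 * k ^ 2 + 2 < x := by
    calc 2 * k ^ 2 + 2 ≤ (⌈2 * k ^ 2 + 2⌉₊ : ℝ) := Nat.le_ceil _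
    _ < x := by rw [hxdef]; exact_mod_cast hMm
  have hk0 : (0:ℝ) < k := by linarith
  have hx1 : (1:ℝ) ≤ x := by nlinarith
  have hx0 : (0:ℝ) < x := by linarith
  set F : ℝ := (⌊x ^ k⌋ : ℝ) with hFdef
  have hF_le : F ≤ x ^ k := Int.floor_le _
  have hF_gt : x ^ k - 1 < F := Int.sub_one_lt_floor _
  have hFpos : (0:ℝ) < F := by
    have : (2:ℝ) ≤ F := by rw [hFdef]; exact_mod_cast hfl2
    linarith
  -- F^((k-1)/k) ≤ x^(k-1)
  have hpow : F ^ ((k - 1) / k) ≤ x ^ (k - 1) := by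
    have h1 : F ^ ((k - 1) / k) ≤ (x ^ k) ^ ((k - 1) / k) := by
      apply Real.rpow_le_rpow (le_of_lt hFpos) hF_le
      exact div_nonneg (by linarith) (le_of_lt hk0)
    have h2 : (x ^ k) ^ ((k - 1) / k) = x ^ (k - 1) := by
      rw [← Real.rpow_mul (le_of_lt hx0)]
      congr 1
      field_simp
    rwa [h2] at h1
  -- main inequality: (x-1)^k ≤ x^k - 1 - (k - 0.5) * x^(k-1)
  have hmain : (x - 1) ^ k ≤ x ^ k - 1 - (k - 0.5) * x ^ (k - 1) := by
    have hxne : x ≠ 0 := ne_of_gt hx0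
    have hfac : x - 1 = x * (1 - 1 / x) := by field_simp
    have h01 : (0:ℝ) ≤ 1 - 1 / x := by
      have : 1 / x ≤ 1 := by
        rw [div_le_one hx0]; exact hx1
      linarith
    -- (1 - 1/x)^k ≤ 1 - k/x + (k/x)^2
    have hbern : (1 - 1 / x) ^ k ≤ 1 - k / x + (k / x) ^ 2 := by
      have t := k / x
      have ht0 : 0 ≤ k / x := by positivity
      have h1 : (1 - 1 / x) ^ k ≤ (Real.exp (-(1 / x))) ^ k := by
        apply Real.rpow_le_rpow h01 _ (le_of_lt hk0)
        linarith [Real.add_one_le_exp (-(1 / x))]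
      have h2 : (Real.exp (-(1 / x))) ^ k = Real.exp (-(k / x)) := by
        rw [← Real.exp_mul]
        ring_nf
      have h3 : Real.exp (-(k / x)) ≤ 1 / (1 + k / x) := by
        rw [Real.exp_neg, inv_eq_one_div, div_le_div_iff₀ (Real.exp_pos _) (by linarith)]
        have := Real.add_one_le_exp (k / x)
        nlinarith
      have h4 : 1 / (1 + k / x) ≤ 1 - k / x + (k / x) ^ 2 := by
        rw [div_le_iff₀ (by linarith)]
        nlinarith
      calc (1 - 1 / x) ^ k ≤ (Real.exp (-(1 / x))) ^ k := h1
      _ = Real.exp (-(k / x)) := h2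
      _ ≤ 1 / (1 + k / x) := h3
      _ ≤ 1 - k / x + (k / x) ^ 2 := h4
    have hsplit : (x - 1) ^ k = x ^ k * (1 - 1 / x) ^ k := by
      rw [hfac, Real.mul_rpow (le_of_lt hx0) h01]
    have hxk_pos : 0 < x ^ k := Real.rpow_pos_of_pos hx0 k
    have e1 : x ^ k = x ^ (k - 1) * x := by
      rw [← Real.rpow_add_one hxne]; ring_nf
    have e2 : x ^ (k - 1) = x ^ (k - 2) * x := by
      rw [← Real.rpow_add_one hxne]; ring_nf
    have hA1 : (1:ℝ) ≤ x ^ (k - 2) := Real.one_le_rpow hx1 (by linarith)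
    have hstep : (x - 1) ^ k ≤ x ^ k - k * x ^ (k - 1) + k ^ 2 * x ^ (k - 2) := by
      rw [hsplit]
      have := mul_le_mul_of_nonneg_left hbern (le_of_lt hxk_pos)
      have expand : x ^ k * (1 - k / x + (k / x) ^ 2)
          = x ^ k - k * x ^ (k - 1) + k ^ 2 * x ^ (k - 2) := by
        rw [e1, e2]
        field_simp
      linarith [this, expand.ge, expand.le]
    -- now x^k - k x^(k-1) + k² x^(k-2) ≤ x^k - 1 - (k-0.5) x^(k-1)
    have hfin : x ^ k - k * x ^ (k - 1) + k ^ 2 * x ^ (k - 2)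
        ≤ x ^ k - 1 - (k - 0.5) * x ^ (k - 1) := by
      have hxk1 : x ^ (k - 1) = x ^ (k - 2) * x := e2
      rw [hxk1]
      norm_num
      nlinarith [hA1, hx, hk0]
    linarith
  intro y hy
  obtain ⟨hy1, hy2⟩ := hy
  constructor
  · have hc : (k - 0.5) * F ^ ((k - 1) / k) ≤ (k - 0.5) * x ^ (k - 1) := by
      apply mul_le_mul_of_nonneg_left hpow
      norm_num; linarith
    have : x ^ k - 1 - (k - 0.5) * x ^ (k - 1) ≤ F - (k - 0.5) * F ^ ((k - 1) / k) := by
      linarith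
    linarith
  · linarith
end

section
/- Assume that for every pair of consecutive primes p < q with p > x₀ one has q - p < q^0.525. Let g > x₀ be an integer and set k = g^1.5/(g^1.5 - (g-1)^1.5). Then there exists a constant C(g) = g²·(⌊g^(2/19)⌋ + 1) such that for all consecutive primes p < q with p > C(g), one has q - p < p/k. -/
def ConsecutivePrimes (p q : ℕ) : Prop :=
  p.Prime ∧ q.Prime ∧ p < q ∧ ∀ r, p < r → r < q → ¬ r.Prime

lemma le_rpow_div' {x y r : ℝ} (hx : 0 ≤ x) (m n : ℕ) (hn : n ≠ 0)
    (hr : r * n = m) (h : y ^ n ≤ x ^ m) : y ≤ x ^ r := by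
  apply le_of_pow_le_pow_left₀ hn (Real.rpow_nonneg hx r)
  have key : (x ^ r) ^ (n : ℕ) = x ^ (m : ℕ) := by
    rw [← Real.rpow_natCast (x ^ r) n, ← Real.rpow_mul hx, hr, Real.rpow_natCast]
  rw [key]; exact h

lemma rpow_div_lt' {x y r : ℝ} (hx : 0 ≤ x) (hy : 0 ≤ y) (m n : ℕ)
    (hr : r * n = m) (h : x ^ m < y ^ n) : x ^ r < y := by
  apply lt_of_pow_lt_pow_left₀ n hy
  have key : (x ^ r) ^ (n : ℕ) = x ^ (m : ℕ) := by
    rw [← Real.rpow_natCast (x ^ r) n, ← Real.rpow_mul hx, hr, Real.rpow_natCast]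
  rw [key]; exact h

lemma rpow_div_le' {x y r : ℝ} (hx : 0 ≤ x) (hy : 0 ≤ y) (m n : ℕ) (hn : n ≠ 0)
    (hr : r * n = m) (h : x ^ m ≤ y ^ n) : x ^ r ≤ y := by
  apply le_of_pow_le_pow_left₀ hn hy
  have key : (x ^ r) ^ (n : ℕ) = x ^ (m : ℕ) := by
    rw [← Real.rpow_natCast (x ^ r) n, ← Real.rpow_mul hx, hr, Real.rpow_natCast]
  rw [key]; exact h

lemma cube_gap {v s : ℝ} (hs0 : 0 ≤ s) (hv0 : 0 ≤ v) (hvs : v ^ 2 = s ^ 2 + 1) :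
    (3/2) * s ≤ v ^ 3 - s ^ 3 := by
  have hsq : (v ^ 3) ^ 2 = (s ^ 2 + 1) ^ 3 := by rw [← hvs]; ring
  have h1 : (s ^ 3 + 3/2 * s) ^ 2 ≤ (v ^ 3) ^ 2 := by nlinarith [sq_nonneg s]
  have h2 := le_of_pow_le_pow_left₀ (two_ne_zero) (pow_nonneg hv0 3) h1
  linarith

lemma v_le_s {v s : ℝ} (hs0 : 0 ≤ s) (hv0 : 0 ≤ v) (hvs : v ^ 2 = s ^ 2 + 1)
    (hsge : 7 ≤ s ^ 2) : (6/5) * v ≤ (3/2) * s := by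
  have h1 : ((6/5) * v) ^ 2 ≤ ((3/2) * s) ^ 2 := by nlinarith
  exact le_of_pow_le_pow_left₀ (two_ne_zero) (by positivity) h1

theorem stmt_16 (x₀ : ℝ)
    (hBHP : ∀ p q : ℕ, ConsecutivePrimes p q → x₀ < p →
      (q : ℝ) - p < (q : ℝ) ^ (0.525 : ℝ))
    (g : ℕ) (hg : x₀ < g) :
    ∀ p q : ℕ, ConsecutivePrimes p q →
      (g : ℝ) ^ 2 * ((⌊(g : ℝ) ^ ((2 : ℝ) / 19)⌋ : ℝ) + 1) < p →
      (q : ℝ) - p <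
        (p : ℝ) / ((g : ℝ) ^ (1.5 : ℝ) / ((g : ℝ) ^ (1.5 : ℝ) - ((g : ℝ) - 1) ^ (1.5 : ℝ))) := by
  intro p q hpq hC
  by_cases hg8 : (8:ℝ) ≤ (g:ℝ)
  · -- main case: g ≥ 8
    obtain ⟨hp, hq, hpq', hcons⟩ := hpq
    set G : ℝ := (g:ℝ) with hGdef
    have hG0 : (0:ℝ) < G := by linarith
    have hG1 : (1:ℝ) ≤ G := by linarith
    -- p > G^2 * G^(2/19)
    have hfloor : G ^ ((2:ℝ)/19) < (⌊G ^ ((2:ℝ)/19)⌋ : ℝ) + 1 := Int.lt_floor_add_one _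
    have hCP : G ^ 2 * G ^ ((2:ℝ)/19) < (p:ℝ) := by
      have h1 : G ^ 2 * G ^ ((2:ℝ)/19) ≤ G ^ 2 * ((⌊G ^ ((2:ℝ)/19)⌋ : ℝ) + 1) :=
        mul_le_mul_of_nonneg_left hfloor.le (by positivity)
      linarith
    have hP0 : (0:ℝ) < (p:ℝ) := by
      have : (0:ℝ) ≤ G ^ 2 * G ^ ((2:ℝ)/19) := by positivity
      linarith
    -- G^40 ≤ p^19
    have hkey219 : (G ^ ((2:ℝ)/19)) ^ (19:ℕ) = G ^ (2:ℕ) := by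
      rw [← Real.rpow_natCast (G ^ ((2:ℝ)/19)) 19, ← Real.rpow_mul hG0.le,
        show ((2:ℝ)/19) * ((19:ℕ):ℝ) = ((2:ℕ):ℝ) by norm_num, Real.rpow_natCast]
    have hPG19 : G ^ 40 ≤ (p:ℝ) ^ 19 := by
      have h2 : (G ^ 2 * G ^ ((2:ℝ)/19)) ^ 19 ≤ (p:ℝ) ^ 19 :=
        pow_le_pow_left₀ (by positivity) hCP.le 19
      calc G ^ 40 = (G ^ 2) ^ 19 * G ^ (2:ℕ) := by ring
        _ = (G ^ 2) ^ 19 * (G ^ ((2:ℝ)/19)) ^ (19:ℕ) := by rw [hkey219]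
        _ = (G ^ 2 * G ^ ((2:ℝ)/19)) ^ 19 := by rw [mul_pow]
        _ ≤ (p:ℝ) ^ 19 := h2
    have hGP : G ≤ (p:ℝ) := by
      have h1 : G ^ 19 ≤ G ^ 40 := pow_le_pow_right₀ hG1 (by norm_num)
      exact le_of_pow_le_pow_left₀ (by norm_num) hP0.le (h1.trans hPG19)
    have hxp : x₀ < (p:ℝ) := lt_of_lt_of_le hg hGP
    have hbhp := hBHP p q ⟨hp, hq, hpq', hcons⟩ hxp
    rw [show (0.525:ℝ) = 21/40 by norm_num] at hbhp
    have hPQ : (p:ℝ) < (q:ℝ) := by exact_mod_cast hpq'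
    have hQ0 : (0:ℝ) < (q:ℝ) := hP0.trans hPQ
    -- 4 ≤ q^(19/40)
    have h4Q : (4:ℝ) ≤ (q:ℝ) ^ ((19:ℝ)/40) := by
      apply le_rpow_div' hQ0.le 19 40 (by norm_num) (by norm_num)
      have h8 : (4:ℝ) ^ 40 ≤ G ^ 40 := by
        calc (4:ℝ) ^ 40 ≤ (8:ℝ) ^ 40 := by norm_num
          _ ≤ G ^ 40 := pow_le_pow_left₀ (by norm_num) hg8 40
      have hpq19 : (p:ℝ) ^ 19 ≤ (q:ℝ) ^ 19 := pow_le_pow_left₀ hP0.le hPQ.le 19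
      linarith
    have hQsplit : (q:ℝ) ^ ((19:ℝ)/40) * (q:ℝ) ^ ((21:ℝ)/40) = (q:ℝ) := by
      rw [← Real.rpow_add hQ0]; norm_num
    have hQ14 : (q:ℝ) ^ ((21:ℝ)/40) ≤ (q:ℝ) / 4 := by
      rw [le_div_iff₀ (by norm_num : (0:ℝ) < 4)]
      calc (q:ℝ) ^ ((21:ℝ)/40) * 4 ≤ (q:ℝ) ^ ((21:ℝ)/40) * (q:ℝ) ^ ((19:ℝ)/40) :=
            mul_le_mul_of_nonneg_left h4Q (Real.rpow_nonneg hQ0.le _)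
        _ = (q:ℝ) := by rw [mul_comm]; exact hQsplit
    have hQP43 : (q:ℝ) ≤ (4/3) * (p:ℝ) := by
      linarith [hbhp]
    -- p^(21/40) ≤ p / G
    have hGP19 : G ≤ (p:ℝ) ^ ((19:ℝ)/40) :=
      le_rpow_div' hP0.le 19 40 (by norm_num) (by norm_num) hPG19
    have hPsplit : (p:ℝ) ^ ((19:ℝ)/40) * (p:ℝ) ^ ((21:ℝ)/40) = (p:ℝ) := by
      rw [← Real.rpow_add hP0]; norm_num
    have hP21 : (p:ℝ) ^ ((21:ℝ)/40) ≤ (p:ℝ) / G := by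
      rw [le_div_iff₀ hG0]
      calc (p:ℝ) ^ ((21:ℝ)/40) * G ≤ (p:ℝ) ^ ((21:ℝ)/40) * (p:ℝ) ^ ((19:ℝ)/40) :=
            mul_le_mul_of_nonneg_left hGP19 (Real.rpow_nonneg hP0.le _)
        _ = (p:ℝ) := by rw [mul_comm]; exact hPsplit
    have h43 : ((4:ℝ)/3) ^ ((21:ℝ)/40) ≤ 6/5 := by
      apply rpow_div_le' (by norm_num) (by norm_num) 21 40 (by norm_num) (by norm_num)
      rw [div_pow, div_pow, div_le_div_iff₀ (by positivity) (by positivity)]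
      norm_num
    have hQr : (q:ℝ) ^ ((21:ℝ)/40) ≤ (6/5) * ((p:ℝ) / G) := by
      calc (q:ℝ) ^ ((21:ℝ)/40) ≤ ((4/3) * (p:ℝ)) ^ ((21:ℝ)/40) :=
            Real.rpow_le_rpow hQ0.le hQP43 (by norm_num)
        _ = ((4:ℝ)/3) ^ ((21:ℝ)/40) * (p:ℝ) ^ ((21:ℝ)/40) :=
            Real.mul_rpow (by norm_num) hP0.le
        _ ≤ (6/5) * ((p:ℝ) / G) :=
            mul_le_mul h43 hP21 (Real.rpow_nonneg hP0.le _) (by norm_num)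
    -- square roots
    set v : ℝ := G ^ ((1:ℝ)/2) with hvdef
    set s : ℝ := (G - 1) ^ ((1:ℝ)/2) with hsdef
    have hGm1 : (0:ℝ) ≤ G - 1 := by linarith
    have hv0 : 0 ≤ v := Real.rpow_nonneg hG0.le _
    have hs0 : 0 ≤ s := Real.rpow_nonneg hGm1 _
    have hv2 : v ^ 2 = G := by
      rw [hvdef, ← Real.rpow_natCast (G ^ ((1:ℝ)/2)) 2, ← Real.rpow_mul hG0.le,
        show ((1:ℝ)/2) * ((2:ℕ):ℝ) = 1 by norm_num, Real.rpow_one]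
    have hs2 : s ^ 2 = G - 1 := by
      rw [hsdef, ← Real.rpow_natCast ((G - 1) ^ ((1:ℝ)/2)) 2, ← Real.rpow_mul hGm1,
        show ((1:ℝ)/2) * ((2:ℕ):ℝ) = 1 by norm_num, Real.rpow_one]
    have hG32 : G ^ (1.5:ℝ) = v ^ 3 := by
      rw [hvdef, ← Real.rpow_natCast (G ^ ((1:ℝ)/2)) 3, ← Real.rpow_mul hG0.le,
        show ((1:ℝ)/2) * ((3:ℕ):ℝ) = (1.5:ℝ) by norm_num]
    have hs32 : (G - 1) ^ (1.5:ℝ) = s ^ 3 := by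
      rw [hsdef, ← Real.rpow_natCast ((G - 1) ^ ((1:ℝ)/2)) 3, ← Real.rpow_mul hGm1,
        show ((1:ℝ)/2) * ((3:ℕ):ℝ) = (1.5:ℝ) by norm_num]
    have hspos : 0 < s := Real.rpow_pos_of_pos (by linarith) _
    have hvpos : 0 < v := Real.rpow_pos_of_pos hG0 _
    clear_value v s
    have hvs : v ^ 2 = s ^ 2 + 1 := by rw [hv2, hs2]; ring
    have hsge : 7 ≤ s ^ 2 := by rw [hs2]; linarith
    have hD : (3/2) * s ≤ v ^ 3 - s ^ 3 := cube_gap hs0 hv0 hvs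
    have h12v : (6/5) * v ≤ (3/2) * s := v_le_s hs0 hv0 hvs hsge
    have hfin : (6/5) * ((p:ℝ) / G) ≤ (p:ℝ) * (v ^ 3 - s ^ 3) / v ^ 3 := by
      rw [show (6/5) * ((p:ℝ) / G) = (6/5) * (p:ℝ) / G by ring,
        div_le_div_iff₀ hG0 (by positivity)]
      have hcomb : (6/5) * v ≤ v ^ 3 - s ^ 3 := by linarith
      calc (6/5) * (p:ℝ) * v ^ 3 = ((p:ℝ) * v ^ 2) * ((6/5) * v) := by ring
        _ ≤ ((p:ℝ) * v ^ 2) * (v ^ 3 - s ^ 3) :=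
            mul_le_mul_of_nonneg_left hcomb (by positivity)
        _ = (p:ℝ) * (v ^ 3 - s ^ 3) * v ^ 2 := by ring
        _ = (p:ℝ) * (v ^ 3 - s ^ 3) * G := by rw [hv2]
    rw [hG32, hs32, div_div_eq_mul_div]
    calc (q:ℝ) - (p:ℝ) < (q:ℝ) ^ ((21:ℝ)/40) := hbhp
      _ ≤ (6/5) * ((p:ℝ) / G) := hQr
      _ ≤ (p:ℝ) * (v ^ 3 - s ^ 3) / v ^ 3 := hfin
  · -- small case: g ≤ 7, contradiction with BHP at (7,11)
    exfalso
    have hg7 : (g:ℝ) ≤ 7 := by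
      have : g < 8 := by exact_mod_cast (not_le.mp hg8)
      have : g ≤ 7 := by omega
      exact_mod_cast this
    have hcons711 : ConsecutivePrimes 7 11 := by
      refine ⟨by norm_num, by norm_num, by norm_num, ?_⟩
      intro r h1 h2
      interval_cases r <;> norm_num
    have h711 := hBHP 7 11 hcons711 (by push_cast; linarith)
    push_cast at h711
    have hlt4 : (11:ℝ) ^ (0.525:ℝ) < 4 :=
      rpow_div_lt' (by norm_num) (by norm_num) 21 40 (by norm_num) (by norm_num)
    linarith
end
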